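/- Assume the center K := Z(H) of H is a field. If W + σ(W) ≠ H_ℂ (i.e., the orthogonal factor M, the orthogonal complement of W + σ(W) in H_ℂ with respect to the ℂ-bilinear extension of ⟨,⟩, is nonzero), then H is a simple ring: its only two-sided ideals are 0 and H; thus H is a simple central algebra over K. -/
import Mathlib


open scoped TensorProduct

noncomputable section

/-- Complex conjugation on `ℂ` as a `ℚ`-algebra homomorphism. -/
def conjQAlg : ℂ →ₐ[ℚ] ℂ := (Complex.conjAe.restrictScalars ℚ).toAlgHom

variable (H : Type) [Ring H] [Algebra ℚ H] [FiniteDimensional ℚ H]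

/-- The conjugate-linear involution of `H_ℂ = ℂ ⊗[ℚ] H` fixing `H`. -/
def sigmaC : ℂ ⊗[ℚ] H →ₗ[ℚ] ℂ ⊗[ℚ] H :=
  (Algebra.TensorProduct.map conjQAlg (AlgHom.id ℚ H)).toLinearMap

/-- The inclusion of `H` into `H_ℂ = ℂ ⊗[ℚ] H`. -/
def inclH : H →ₐ[ℚ] ℂ ⊗[ℚ] H := Algebra.TensorProduct.includeRight

/-- The data of a polarized weight 2 Hodge structure on a finite-dimensional `ℚ`-algebra `H`,
compatible with the ring structure:
(i) a Hodge decomposition `H_ℂ = H^{2,0} ⊕ H^{1,1} ⊕ H^{0,2}` with `σ(H^{2,0}) = H^{0,2}`,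
`σ(H^{1,1}) = H^{1,1}`;
(ii) a polarization: a symmetric `ℚ`-bilinear form `B` on `H` with `ℂ`-bilinear extension `BC`
to `H_ℂ`, whose associated Hermitian pairing `h(α,β) := BC α (σ β)` makes the Hodge pieces
pairwise orthogonal and is positive definite on `H^{2,0}`, `H^{0,2}` and negative definite on
`H^{1,1}`;
(iii) the product is a morphism of Hodge structures of bidegree `(-1,-1)`:
`H^{p,q}·H^{p',q'} ⊆ H^{p+p'-1,q+q'-1}`;
(iv) an adjunction `t`: a `ℚ`-linear involution with `t(ab) = t(b)t(a)`,
`⟨ab,c⟩ = ⟨b, t(a)c⟩` and `⟨ab,c⟩ = ⟨a, c·t(b)⟩`. -/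
structure HodgeAlgebraData where
  H20 : Submodule ℂ (ℂ ⊗[ℚ] H)
  H11 : Submodule ℂ (ℂ ⊗[ℚ] H)
  H02 : Submodule ℂ (ℂ ⊗[ℚ] H)
  sup_top : H20 ⊔ H11 ⊔ H02 = ⊤
  disj1 : H20 ⊓ (H11 ⊔ H02) = ⊥
  disj2 : H11 ⊓ H02 = ⊥
  sigma_20 : ∀ x ∈ H20, sigmaC H x ∈ H02
  sigma_02 : ∀ x ∈ H02, sigmaC H x ∈ H20
  sigma_11 : ∀ x ∈ H11, sigmaC H x ∈ H11
  B : H →ₗ[ℚ] H →ₗ[ℚ] ℚ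
  B_symm : ∀ a b : H, B a b = B b a
  BC : (ℂ ⊗[ℚ] H) →ₗ[ℂ] (ℂ ⊗[ℚ] H) →ₗ[ℂ] ℂ
  BC_extends : ∀ a b : H, BC (inclH H a) (inclH H b) = (B a b : ℂ)
  BC_symm : ∀ x y, BC x y = BC y x
  BC_conj : ∀ x y, BC (sigmaC H x) (sigmaC H y) = starRingEnd ℂ (BC x y)
  orth_20_11 : ∀ x ∈ H20, ∀ y ∈ H11, BC x (sigmaC H y) = 0
  orth_20_02 : ∀ x ∈ H20, ∀ y ∈ H02, BC x (sigmaC H y) = 0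
  orth_11_02 : ∀ x ∈ H11, ∀ y ∈ H02, BC x (sigmaC H y) = 0
  pos_20 : ∀ x ∈ H20, x ≠ 0 → 0 < (BC x (sigmaC H x)).re ∧ (BC x (sigmaC H x)).im = 0
  pos_02 : ∀ x ∈ H02, x ≠ 0 → 0 < (BC x (sigmaC H x)).re ∧ (BC x (sigmaC H x)).im = 0
  neg_11 : ∀ x ∈ H11, x ≠ 0 → (BC x (sigmaC H x)).re < 0 ∧ (BC x (sigmaC H x)).im = 0
  mul_20_20 : ∀ x ∈ H20, ∀ y ∈ H20, x * y = 0
  mul_20_11 : ∀ x ∈ H20, ∀ y ∈ H11, x * y ∈ H20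
  mul_11_20 : ∀ x ∈ H11, ∀ y ∈ H20, x * y ∈ H20
  mul_11_11 : ∀ x ∈ H11, ∀ y ∈ H11, x * y ∈ H11
  mul_20_02 : ∀ x ∈ H20, ∀ y ∈ H02, x * y ∈ H11
  mul_02_20 : ∀ x ∈ H02, ∀ y ∈ H20, x * y ∈ H11
  mul_02_02 : ∀ x ∈ H02, ∀ y ∈ H02, x * y = 0
  mul_11_02 : ∀ x ∈ H11, ∀ y ∈ H02, x * y ∈ H02
  mul_02_11 : ∀ x ∈ H02, ∀ y ∈ H11, x * y ∈ H02
  t : H →ₗ[ℚ] H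
  t_invol : ∀ a : H, t (t a) = a
  t_mul : ∀ a b : H, t (a * b) = t b * t a
  adj_left : ∀ a b c : H, B (a * b) c = B b (t a * c)
  adj_right : ∀ a b c : H, B (a * b) c = B a (c * t b)

variable {H}

/-- `W := H^{2,0}·H_ℂ`, the `ℂ`-linear span of all products `x·y` with `x ∈ H^{2,0}`,
`y ∈ H_ℂ`. -/
def HodgeAlgebraData.W (D : HodgeAlgebraData H) : Submodule ℂ (ℂ ⊗[ℚ] H) := D.H20 * ⊤

/-- `σ(W)`, the image of `W` under the conjugation `σ`, as a `ℚ`-subspace of `H_ℂ`. -/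
def HodgeAlgebraData.sigmaW (D : HodgeAlgebraData H) : Submodule ℚ (ℂ ⊗[ℚ] H) :=
  (D.W.restrictScalars ℚ).map (sigmaC H)

/-- The `ℂ`-linear extension of `t` to `H_ℂ`. -/
def HodgeAlgebraData.tC (D : HodgeAlgebraData H) : ℂ ⊗[ℚ] H →ₗ[ℂ] ℂ ⊗[ℚ] H :=
  LinearMap.baseChange ℂ D.t

/-! ### Auxiliary lemmas -/

set_option linter.unusedSectionVars false
set_option maxHeartbeats 1000000

section Aux

lemma sigmaC_tmul (c : ℂ) (a : H) :
    sigmaC H (c ⊗ₜ[ℚ] a) = (starRingEnd ℂ c) ⊗ₜ[ℚ] a := rfl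

lemma sigmaC_mul (x y : ℂ ⊗[ℚ] H) : sigmaC H (x * y) = sigmaC H x * sigmaC H y :=
  map_mul (Algebra.TensorProduct.map conjQAlg (AlgHom.id ℚ H)) x y

lemma sigmaC_sigmaC (x : ℂ ⊗[ℚ] H) : sigmaC H (sigmaC H x) = x := by
  induction x using TensorProduct.induction_on with
  | zero => simp
  | tmul c a => simp [sigmaC_tmul, Complex.conj_conj]
  | add x y hx hy => rw [map_add, map_add, hx, hy]

lemma sigmaC_smul (c : ℂ) (x : ℂ ⊗[ℚ] H) :
    sigmaC H (c • x) = (starRingEnd ℂ c) • sigmaC H x := by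
  induction x using TensorProduct.induction_on with
  | zero => simp
  | tmul d a =>
      rw [TensorProduct.smul_tmul', sigmaC_tmul, sigmaC_tmul, TensorProduct.smul_tmul', smul_eq_mul,
        smul_eq_mul, map_mul]
  | add x y hx hy => rw [smul_add, map_add, hx, hy, map_add, smul_add]

lemma sigmaC_inclH (a : H) : sigmaC H (inclH H a) = inclH H a := by
  show sigmaC H ((1:ℂ) ⊗ₜ[ℚ] a) = _
  rw [sigmaC_tmul, map_one]; rfl

lemma sigmaC_one : sigmaC H 1 = 1 :=
  map_one (Algebra.TensorProduct.map conjQAlg (AlgHom.id ℚ H))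

lemma inclH_eq_zero {a : H} (h : inclH H a = 0) : a = 0 := by
  obtain ⟨f, hf⟩ := (LinearMap.toSpanSingleton ℚ ℂ 1).exists_leftInverse_of_injective
    (by rw [LinearMap.ker_eq_bot]; intro x y hxy; simpa using hxy)
  have hf1 : f 1 = 1 := by
    have := congrArg (fun g => g 1) hf
    simpa [LinearMap.toSpanSingleton] using this
  have : (TensorProduct.lid ℚ H) ((f.rTensor H) (inclH H a)) = a := by
    show (TensorProduct.lid ℚ H) ((f.rTensor H) ((1:ℂ) ⊗ₜ[ℚ] a)) = a
    rw [LinearMap.rTensor_tmul, hf1]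
    simp
  rw [h, map_zero,
    show (TensorProduct.lid ℚ H) 0 = 0 from map_zero (TensorProduct.lid ℚ H).toLinearMap] at this
  exact this.symm

end Aux

namespace HodgeAlgebraData

variable (D : HodgeAlgebraData H)

/-! #### Decomposition lemmas -/

lemma decomp (x : ℂ ⊗[ℚ] H) :
    ∃ a ∈ D.H20, ∃ b ∈ D.H11, ∃ c ∈ D.H02, x = a + b + c := by
  have hx : x ∈ D.H20 ⊔ D.H11 ⊔ D.H02 := by rw [D.sup_top]; trivial
  obtain ⟨d, hd, c, hc, rfl⟩ := Submodule.mem_sup.mp hx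
  obtain ⟨a, ha, b, hb, rfl⟩ := Submodule.mem_sup.mp hd
  exact ⟨a, ha, b, hb, c, hc, rfl⟩

lemma uniq {a b c : ℂ ⊗[ℚ] H} (ha : a ∈ D.H20) (hb : b ∈ D.H11) (hc : c ∈ D.H02)
    (h : a + b + c = 0) : a = 0 ∧ b = 0 ∧ c = 0 := by
  have ha0 : a = 0 := by
    have : a ∈ D.H20 ⊓ (D.H11 ⊔ D.H02) := by
      refine ⟨ha, ?_⟩
      have h' : a + (b + c) = 0 := by rw [← add_assoc]; exact h
      rw [eq_neg_of_add_eq_zero_left h']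
      exact Submodule.neg_mem _ (Submodule.add_mem _ (Submodule.mem_sup_left hb)
        (Submodule.mem_sup_right hc))
    rw [D.disj1] at this; simpa using this
  have hb0 : b = 0 := by
    have : b ∈ D.H11 ⊓ D.H02 := by
      refine ⟨hb, ?_⟩
      have h' : b + c = 0 := by rw [ha0, zero_add] at h; exact h
      rw [eq_neg_of_add_eq_zero_left h']; exact Submodule.neg_mem _ hc
    rw [D.disj2] at this; simpa using this
  refine ⟨ha0, hb0, ?_⟩
  rw [ha0, hb0, zero_add, zero_add] at h; exact h

lemma sandwich {x : ℂ ⊗[ℚ] H} (h1 : x ∈ D.H20 ⊔ D.H11) (h2 : x ∈ D.H11 ⊔ D.H02) :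
    x ∈ D.H11 := by
  obtain ⟨a, ha, b, hb, rfl⟩ := Submodule.mem_sup.mp h1
  obtain ⟨b', hb', c, hc, hx⟩ := Submodule.mem_sup.mp h2
  have heq : a + (b - b') + (-c) = 0 := by
    have h3 : (a + b) - (b' + c) = 0 := by rw [hx]; exact sub_self _
    calc a + (b - b') + (-c) = (a + b) - (b' + c) := by abel
    _ = 0 := h3
  obtain ⟨h0, -, -⟩ := D.uniq ha (Submodule.sub_mem _ hb hb') (Submodule.neg_mem _ hc) heq
  rw [h0, zero_add]; exact hb

/-! #### BC vanishing lemmas -/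

lemma bc_20_20 {x y} (hx : x ∈ D.H20) (hy : y ∈ D.H20) : D.BC x y = 0 := by
  have := D.orth_20_02 x hx (sigmaC H y) (D.sigma_20 y hy)
  rwa [sigmaC_sigmaC] at this

lemma bc_11_20 {x y} (hx : x ∈ D.H11) (hy : y ∈ D.H20) : D.BC x y = 0 := by
  have := D.orth_11_02 x hx (sigmaC H y) (D.sigma_20 y hy)
  rwa [sigmaC_sigmaC] at this

lemma bc_11_02 {x y} (hx : x ∈ D.H11) (hy : y ∈ D.H02) : D.BC x y = 0 := by
  have h := D.BC_conj x y
  rw [D.bc_11_20 (D.sigma_11 x hx) (D.sigma_02 y hy)] at h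
  have := congrArg (starRingEnd ℂ) h.symm
  rwa [Complex.conj_conj, map_zero] at this

lemma bc_02_02 {x y} (hx : x ∈ D.H02) (hy : y ∈ D.H02) : D.BC x y = 0 := by
  have h := D.BC_conj x y
  rw [D.bc_20_20 (D.sigma_02 x hx) (D.sigma_02 y hy)] at h
  have := congrArg (starRingEnd ℂ) h.symm
  rwa [Complex.conj_conj, map_zero] at this

/-! #### Definiteness lemmas (contrapositives) -/

lemma zero_of_20 {x} (hx : x ∈ D.H20) (h : D.BC x (sigmaC H x) = 0) : x = 0 := by
  by_contra hne
  exact absurd (h ▸ (D.pos_20 x hx hne).1) (by simp)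

lemma zero_of_02 {x} (hx : x ∈ D.H02) (h : D.BC x (sigmaC H x) = 0) : x = 0 := by
  by_contra hne
  exact absurd (h ▸ (D.pos_02 x hx hne).1) (by simp)

lemma zero_of_11 {x} (hx : x ∈ D.H11) (h : D.BC x (sigmaC H x) = 0) : x = 0 := by
  by_contra hne
  exact absurd (h ▸ (D.neg_11 x hx hne).1) (by simp)

end HodgeAlgebraData

namespace Part2

variable {H : Type} [Ring H] [Algebra ℚ H] [FiniteDimensional ℚ H] (D : HodgeAlgebraData H)

open HodgeAlgebraData Submodule

/-! #### Submodule product lemmas -/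

lemma m2020 : D.H20 * D.H20 ≤ ⊥ :=
  Submodule.mul_le.mpr fun x hx y hy => by
    rw [D.mul_20_20 x hx y hy]; exact Submodule.zero_mem ⊥

lemma m0202 : D.H02 * D.H02 ≤ ⊥ :=
  Submodule.mul_le.mpr fun x hx y hy => by
    rw [D.mul_02_02 x hx y hy]; exact Submodule.zero_mem ⊥

lemma m2011 : D.H20 * D.H11 ≤ D.H20 := Submodule.mul_le.mpr D.mul_20_11
lemma m1120 : D.H11 * D.H20 ≤ D.H20 := Submodule.mul_le.mpr D.mul_11_20
lemma m2002 : D.H20 * D.H02 ≤ D.H11 := Submodule.mul_le.mpr D.mul_20_02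
lemma m0220 : D.H02 * D.H20 ≤ D.H11 := Submodule.mul_le.mpr D.mul_02_20
lemma m1102 : D.H11 * D.H02 ≤ D.H02 := Submodule.mul_le.mpr D.mul_11_02
lemma m0211 : D.H02 * D.H11 ≤ D.H02 := Submodule.mul_le.mpr D.mul_02_11

lemma top_eq : (⊤ : Submodule ℂ (ℂ ⊗[ℚ] H)) = D.H20 ⊔ D.H11 ⊔ D.H02 := D.sup_top.symm

lemma H20top : D.H20 * ⊤ ≤ D.H20 ⊔ D.H11 := by
  rw [top_eq D, Submodule.mul_sup, Submodule.mul_sup]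
  refine sup_le (sup_le ?_ ?_) ?_
  · exact le_trans (m2020 D) bot_le
  · exact le_trans (m2011 D) le_sup_left
  · exact le_trans (m2002 D) le_sup_right

lemma H02top : D.H02 * ⊤ ≤ D.H11 ⊔ D.H02 := by
  rw [top_eq D, Submodule.mul_sup, Submodule.mul_sup]
  refine sup_le (sup_le ?_ ?_) ?_
  · exact le_trans (m0220 D) le_sup_left
  · exact le_trans (m0211 D) le_sup_right
  · exact le_trans (m0202 D) bot_le

lemma topH20 : (⊤ : Submodule ℂ (ℂ ⊗[ℚ] H)) * D.H20 ≤ D.H20 ⊔ D.H11 := by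
  rw [top_eq D, Submodule.sup_mul, Submodule.sup_mul]
  refine sup_le (sup_le ?_ ?_) ?_
  · exact le_trans (m2020 D) bot_le
  · exact le_trans (m1120 D) le_sup_left
  · exact le_trans (m0220 D) le_sup_right

lemma topH02 : (⊤ : Submodule ℂ (ℂ ⊗[ℚ] H)) * D.H02 ≤ D.H11 ⊔ D.H02 := by
  rw [top_eq D, Submodule.sup_mul, Submodule.sup_mul]
  refine sup_le (sup_le ?_ ?_) ?_
  · exact le_trans (m2002 D) le_sup_left
  · exact le_trans (m1102 D) le_sup_right
  · exact le_trans (m0202 D) bot_le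

/-- `V := H^{2,0} ⊕ H^{0,2}`. -/
def V : Submodule ℂ (ℂ ⊗[ℚ] H) := D.H20 ⊔ D.H02

/-- `U := V·H_ℂ`;  this coincides with `W + σ(W)`. -/
def U : Submodule ℂ (ℂ ⊗[ℚ] H) := V D * ⊤

lemma H20_le_U : D.H20 ≤ U D := fun x hx => by
  have := Submodule.mul_mem_mul (M := V D) (N := (⊤ : Submodule ℂ (ℂ ⊗[ℚ] H)))
    (Submodule.mem_sup_left hx) (Submodule.mem_top (x := (1 : ℂ ⊗[ℚ] H)))
  rwa [mul_one] at this

lemma H02_le_U : D.H02 ≤ U D := fun x hx => by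
  have := Submodule.mul_mem_mul (M := V D) (N := (⊤ : Submodule ℂ (ℂ ⊗[ℚ] H)))
    (Submodule.mem_sup_right hx) (Submodule.mem_top (x := (1 : ℂ ⊗[ℚ] H)))
  rwa [mul_one] at this

lemma U_mul_top : U D * ⊤ ≤ U D := by
  rw [U, mul_assoc]
  exact mul_le_mul' le_rfl le_top

lemma top_mul_U : (⊤ : Submodule ℂ (ℂ ⊗[ℚ] H)) * U D ≤ U D := by
  rw [top_eq D, Submodule.sup_mul, Submodule.sup_mul]
  refine sup_le (sup_le ?_ ?_) ?_
  · calc D.H20 * U D ≤ D.H20 * ⊤ := mul_le_mul' le_rfl le_top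
    _ ≤ V D * ⊤ := mul_le_mul' le_sup_left le_rfl
  · calc D.H11 * U D = (D.H11 * V D) * ⊤ := by rw [U, mul_assoc]
    _ ≤ V D * ⊤ := by
        refine mul_le_mul' ?_ le_rfl
        rw [V, Submodule.mul_sup]
        exact sup_le (le_trans (m1120 D) le_sup_left) (le_trans (m1102 D) le_sup_right)
  · calc D.H02 * U D ≤ D.H02 * ⊤ := mul_le_mul' le_rfl le_top
    _ ≤ V D * ⊤ := mul_le_mul' le_sup_right le_rfl

lemma U_sigma : ∀ x ∈ U D, sigmaC H x ∈ U D := by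
  intro x hx
  refine Submodule.mul_induction_on hx (fun v hv y _ => ?_) (fun a b ha hb => ?_)
  · rw [sigmaC_mul]
    refine Submodule.mul_mem_mul ?_ Submodule.mem_top
    obtain ⟨p, hp, q, hq, rfl⟩ := Submodule.mem_sup.mp hv
    rw [map_add]
    exact Submodule.add_mem _ (Submodule.mem_sup_right (D.sigma_20 p hp))
      (Submodule.mem_sup_left (D.sigma_02 q hq))
  · rw [map_add]; exact Submodule.add_mem _ ha hb

/-! #### Complex bilinear adjunction -/

lemma BC_tmul (c d : ℂ) (a b : H) :
    D.BC (c ⊗ₜ[ℚ] a) (d ⊗ₜ[ℚ] b) = c * d * (D.B a b : ℂ) := by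
  have h1 : c ⊗ₜ[ℚ] a = c • ((1:ℂ) ⊗ₜ[ℚ] a) := by
    rw [TensorProduct.smul_tmul', smul_eq_mul, mul_one]
  have h2 : d ⊗ₜ[ℚ] b = d • ((1:ℂ) ⊗ₜ[ℚ] b) := by
    rw [TensorProduct.smul_tmul', smul_eq_mul, mul_one]
  have := D.BC_extends a b
  rw [show inclH H a = (1:ℂ) ⊗ₜ[ℚ] a from rfl, show inclH H b = (1:ℂ) ⊗ₜ[ℚ] b from rfl] at this
  rw [h1, h2, map_smul, map_smul, LinearMap.smul_apply, this, smul_eq_mul, smul_eq_mul]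
  ring

lemma tC_tmul (c : ℂ) (a : H) : D.tC (c ⊗ₜ[ℚ] a) = c ⊗ₜ[ℚ] D.t a :=
  LinearMap.baseChange_tmul ..

lemma adjC_left : ∀ a b c : ℂ ⊗[ℚ] H, D.BC (a * b) c = D.BC b (D.tC a * c) := by
  intro a
  induction a using TensorProduct.induction_on with
  | zero => intro b c; simp
  | add a₁ a₂ h₁ h₂ =>
      intro b c
      rw [add_mul, map_add, LinearMap.add_apply, h₁ b c, h₂ b c, map_add, add_mul, map_add]
  | tmul ca a =>
      intro b
      induction b using TensorProduct.induction_on with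
      | zero => intro c; simp
      | add b₁ b₂ h₁ h₂ =>
          intro c
          rw [mul_add, map_add, LinearMap.add_apply, h₁ c, h₂ c, map_add, LinearMap.add_apply]
      | tmul cb b =>
          intro c
          induction c using TensorProduct.induction_on with
          | zero => simp
          | add c₁ c₂ h₁ h₂ => rw [map_add, mul_add, map_add, h₁, h₂]
          | tmul cc c =>
              rw [Algebra.TensorProduct.tmul_mul_tmul, tC_tmul,
                Algebra.TensorProduct.tmul_mul_tmul, BC_tmul, BC_tmul, D.adj_left]
              ring

lemma adjC_right : ∀ a b c : ℂ ⊗[ℚ] H, D.BC (a * b) c = D.BC a (c * D.tC b) := by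
  intro a
  induction a using TensorProduct.induction_on with
  | zero => intro b c; simp
  | add a₁ a₂ h₁ h₂ =>
      intro b c
      rw [add_mul, map_add, LinearMap.add_apply, h₁ b c, h₂ b c, map_add, LinearMap.add_apply]
  | tmul ca a =>
      intro b
      induction b using TensorProduct.induction_on with
      | zero => intro c; simp
      | add b₁ b₂ h₁ h₂ =>
          intro c
          rw [mul_add, map_add, LinearMap.add_apply, h₁ c, h₂ c, map_add, mul_add, map_add]
      | tmul cb b =>
          intro c
          induction c using TensorProduct.induction_on with
          | zero => simp
          | add c₁ c₂ h₁ h₂ => rw [map_add, add_mul, map_add, h₁, h₂]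
          | tmul cc c =>
              rw [Algebra.TensorProduct.tmul_mul_tmul, tC_tmul,
                Algebra.TensorProduct.tmul_mul_tmul, BC_tmul, BC_tmul, D.adj_right]
              ring

end Part2

namespace Part3

variable {H : Type} [Ring H] [Algebra ℚ H] [FiniteDimensional ℚ H] (D : HodgeAlgebraData H)

open HodgeAlgebraData Submodule Part2

theorem isotropic_ideal_eq_bot (N : Submodule ℚ H)
    (hl : ∀ a : H, ∀ x ∈ N, a * x ∈ N) (hr : ∀ a : H, ∀ x ∈ N, x * a ∈ N)
    (hiso : ∀ x ∈ N, ∀ y ∈ N, D.B x y = 0) : N = ⊥ := by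
  haveI : FiniteDimensional ℂ (ℂ ⊗[ℚ] H) := inferInstance
  set Nc : Submodule ℂ (ℂ ⊗[ℚ] H) := Submodule.span ℂ (inclH H '' (N : Set H)) with hNc
  -- σ-stability
  have hNσ : ∀ x ∈ Nc, sigmaC H x ∈ Nc := by
    intro x hx
    induction hx using Submodule.span_induction with
    | mem x h =>
        obtain ⟨n, hn, rfl⟩ := h
        rw [sigmaC_inclH]
        exact Submodule.subset_span ⟨n, hn, rfl⟩
    | zero => rw [map_zero]; exact Submodule.zero_mem _
    | add x y hx hy ha hb => rw [map_add]; exact Submodule.add_mem _ ha hb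
    | smul c x hx h => rw [sigmaC_smul]; exact Submodule.smul_mem _ _ h
  -- ideal property
  have hl1 : ∀ a : ℂ ⊗[ℚ] H, ∀ n ∈ N, a * inclH H n ∈ Nc := by
    intro a n hn
    induction a using TensorProduct.induction_on with
    | zero => rw [zero_mul]; exact Submodule.zero_mem _
    | tmul c b =>
        have heq : (c ⊗ₜ[ℚ] b) * inclH H n = c • (inclH H (b * n)) := by
          show (c ⊗ₜ[ℚ] b) * ((1:ℂ) ⊗ₜ[ℚ] n) = c • ((1:ℂ) ⊗ₜ[ℚ] (b * n))
          rw [Algebra.TensorProduct.tmul_mul_tmul, mul_one, TensorProduct.smul_tmul',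
            smul_eq_mul, mul_one]
        rw [heq]
        exact Submodule.smul_mem _ _ (Submodule.subset_span ⟨b * n, hl b n hn, rfl⟩)
    | add a₁ a₂ h₁ h₂ => rw [add_mul]; exact Submodule.add_mem _ h₁ h₂
  have hr1 : ∀ a : ℂ ⊗[ℚ] H, ∀ n ∈ N, inclH H n * a ∈ Nc := by
    intro a n hn
    induction a using TensorProduct.induction_on with
    | zero => rw [mul_zero]; exact Submodule.zero_mem _
    | tmul c b =>
        have heq : inclH H n * (c ⊗ₜ[ℚ] b) = c • (inclH H (n * b)) := by
          show ((1:ℂ) ⊗ₜ[ℚ] n) * (c ⊗ₜ[ℚ] b) = c • ((1:ℂ) ⊗ₜ[ℚ] (n * b))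
          rw [Algebra.TensorProduct.tmul_mul_tmul, one_mul, TensorProduct.smul_tmul',
            smul_eq_mul, mul_one]
        rw [heq]
        exact Submodule.smul_mem _ _ (Submodule.subset_span ⟨n * b, hr b n hn, rfl⟩)
    | add a₁ a₂ h₁ h₂ => rw [mul_add]; exact Submodule.add_mem _ h₁ h₂
  have hNl : ∀ a : ℂ ⊗[ℚ] H, ∀ x ∈ Nc, a * x ∈ Nc := by
    intro a x hx
    induction hx using Submodule.span_induction with
    | mem x h => obtain ⟨n, hn, rfl⟩ := h; exact hl1 a n hn
    | zero => rw [mul_zero]; exact Submodule.zero_mem _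
    | add x y hx hy ha hb => rw [mul_add]; exact Submodule.add_mem _ ha hb
    | smul c x hx h => rw [mul_smul_comm]; exact Submodule.smul_mem _ _ h
  have hNr : ∀ a : ℂ ⊗[ℚ] H, ∀ x ∈ Nc, x * a ∈ Nc := by
    intro a x hx
    induction hx using Submodule.span_induction with
    | mem x h => obtain ⟨n, hn, rfl⟩ := h; exact hr1 a n hn
    | zero => rw [zero_mul]; exact Submodule.zero_mem _
    | add x y hx hy ha hb => rw [add_mul]; exact Submodule.add_mem _ ha hb
    | smul c x hx h => rw [smul_mul_assoc]; exact Submodule.smul_mem _ _ h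
  have topNc : ⊤ * Nc ≤ Nc := Submodule.mul_le.mpr fun a _ x hx => hNl a x hx
  have Nctop : Nc * ⊤ ≤ Nc := Submodule.mul_le.mpr fun x hx a _ => hNr a x hx
  -- isotropy
  have hIso : ∀ x ∈ Nc, ∀ y ∈ Nc, D.BC x y = 0 := by
    intro x hx y hy
    induction hx, hy using Submodule.span_induction₂ with
    | mem_mem x y hx hy =>
        obtain ⟨n, hn, rfl⟩ := hx
        obtain ⟨n', hn', rfl⟩ := hy
        rw [D.BC_extends, hiso n hn n' hn']
        norm_num
    | zero_left y hy => simp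
    | zero_right x hx => simp
    | add_left x y z hx hy hz h₁ h₂ => rw [map_add, LinearMap.add_apply, h₁, h₂, add_zero]
    | add_right x y z hx hy hz h₁ h₂ => rw [map_add, h₁, h₂, add_zero]
    | smul_left c x y hx hy h => rw [map_smul, LinearMap.smul_apply, h, smul_zero]
    | smul_right c x y hx hy h => rw [map_smul, h, smul_zero]
  -- pieces meet Nc trivially
  have disj20 : ∀ x, x ∈ D.H20 → x ∈ Nc → x = 0 := fun x h1 h2 =>
    D.zero_of_20 h1 (hIso x h2 _ (hNσ x h2))
  have disj11 : ∀ x, x ∈ D.H11 → x ∈ Nc → x = 0 := fun x h1 h2 =>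
    D.zero_of_11 h1 (hIso x h2 _ (hNσ x h2))
  have disj02 : ∀ x, x ∈ D.H02 → x ∈ Nc → x = 0 := fun x h1 h2 =>
    D.zero_of_02 h1 (hIso x h2 _ (hNσ x h2))
  -- graded product vanishing
  have hNcle : Nc ≤ ⊤ := le_top
  have k2020 : D.H20 * Nc * D.H20 ≤ ⊥ := by
    have h1 : D.H20 * Nc * D.H20 ≤ D.H20 := by
      calc D.H20 * Nc * D.H20 ≤ (D.H20 ⊔ D.H11) * D.H20 :=
            mul_le_mul' (le_trans (mul_le_mul' le_rfl le_top) (H20top D)) le_rfl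
      _ = D.H20 * D.H20 ⊔ D.H11 * D.H20 := Submodule.sup_mul _ _ _
      _ ≤ ⊥ ⊔ D.H20 := sup_le_sup (m2020 D) (m1120 D)
      _ ≤ D.H20 := by simp
    have h2 : D.H20 * Nc * D.H20 ≤ Nc := by
      calc D.H20 * Nc * D.H20 ≤ (⊤ * Nc) * ⊤ :=
            mul_le_mul' (mul_le_mul' le_top le_rfl) le_top
      _ ≤ Nc * ⊤ := mul_le_mul' topNc le_rfl
      _ ≤ Nc := Nctop
    intro x hx
    exact (Submodule.mem_bot _).mpr (disj20 x (h1 hx) (h2 hx))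
  have k0202 : D.H02 * Nc * D.H02 ≤ ⊥ := by
    have h1 : D.H02 * Nc * D.H02 ≤ D.H02 := by
      calc D.H02 * Nc * D.H02 ≤ (D.H11 ⊔ D.H02) * D.H02 :=
            mul_le_mul' (le_trans (mul_le_mul' le_rfl le_top) (H02top D)) le_rfl
      _ = D.H11 * D.H02 ⊔ D.H02 * D.H02 := Submodule.sup_mul _ _ _
      _ ≤ D.H02 ⊔ ⊥ := sup_le_sup (m1102 D) (m0202 D)
      _ ≤ D.H02 := by simp
    have h2 : D.H02 * Nc * D.H02 ≤ Nc := by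
      calc D.H02 * Nc * D.H02 ≤ (⊤ * Nc) * ⊤ :=
            mul_le_mul' (mul_le_mul' le_top le_rfl) le_top
      _ ≤ Nc * ⊤ := mul_le_mul' topNc le_rfl
      _ ≤ Nc := Nctop
    intro x hx
    exact (Submodule.mem_bot _).mpr (disj02 x (h1 hx) (h2 hx))
  have k2002 : D.H20 * Nc * D.H02 ≤ ⊥ := by
    have h1 : D.H20 * Nc * D.H02 ≤ D.H20 ⊔ D.H11 := by
      rw [mul_assoc]
      exact le_trans (mul_le_mul' le_rfl le_top) (H20top D)
    have h2 : D.H20 * Nc * D.H02 ≤ D.H11 ⊔ D.H02 :=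
      le_trans (mul_le_mul' le_top le_rfl) (topH02 D)
    have h3 : D.H20 * Nc * D.H02 ≤ Nc := by
      calc D.H20 * Nc * D.H02 ≤ (⊤ * Nc) * ⊤ :=
            mul_le_mul' (mul_le_mul' le_top le_rfl) le_top
      _ ≤ Nc * ⊤ := mul_le_mul' topNc le_rfl
      _ ≤ Nc := Nctop
    intro x hx
    exact (Submodule.mem_bot _).mpr (disj11 x (D.sandwich (h1 hx) (h2 hx)) (h3 hx))
  have k0220 : D.H02 * Nc * D.H20 ≤ ⊥ := by
    have h1 : D.H02 * Nc * D.H20 ≤ D.H11 ⊔ D.H02 := by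
      rw [mul_assoc]
      exact le_trans (mul_le_mul' le_rfl le_top) (H02top D)
    have h2 : D.H02 * Nc * D.H20 ≤ D.H20 ⊔ D.H11 :=
      le_trans (mul_le_mul' le_top le_rfl) (topH20 D)
    have h3 : D.H02 * Nc * D.H20 ≤ Nc := by
      calc D.H02 * Nc * D.H20 ≤ (⊤ * Nc) * ⊤ :=
            mul_le_mul' (mul_le_mul' le_top le_rfl) le_top
      _ ≤ Nc * ⊤ := mul_le_mul' topNc le_rfl
      _ ≤ Nc := Nctop
    intro x hx
    exact (Submodule.mem_bot _).mpr (disj11 x (D.sandwich (h2 hx) (h1 hx)) (h3 hx))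
  have PV : V D * Nc * V D ≤ ⊥ := by
    rw [V, Submodule.sup_mul, Submodule.sup_mul, Submodule.mul_sup, Submodule.mul_sup]
    exact sup_le (sup_le k2020 k2002) (sup_le k0220 k0202)
  have PU : U D * Nc * U D ≤ ⊥ := by
    have step1 : U D * Nc ≤ V D * Nc := by
      rw [U, mul_assoc]
      exact mul_le_mul' le_rfl topNc
    calc U D * Nc * U D ≤ (V D * Nc) * (V D * ⊤) := mul_le_mul' step1 le_rfl
    _ = (V D * Nc * V D) * ⊤ := (mul_assoc (V D * Nc) (V D) ⊤).symm
    _ ≤ ⊥ * ⊤ := mul_le_mul' PV le_rfl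
    _ ≤ ⊥ := by rw [Submodule.bot_mul]
  -- the orthogonal complement of U
  have refl : LinearMap.BilinForm.IsRefl D.BC := fun x y h => by rw [D.BC_symm]; exact h
  set M : Submodule ℂ (ℂ ⊗[ℚ] H) := LinearMap.BilinForm.orthogonal D.BC (U D) with hM
  have memM : ∀ x : ℂ ⊗[ℚ] H, x ∈ M ↔ ∀ u ∈ U D, D.BC u x = 0 := by
    intro x
    exact LinearMap.BilinForm.mem_orthogonal_iff
  have Mleft : ∀ a : ℂ ⊗[ℚ] H, ∀ x ∈ M, a * x ∈ M := by
    intro a x hx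
    rw [memM]
    intro u hu
    rw [D.BC_symm, adjC_left D, D.BC_symm]
    exact (memM x).mp hx _ (top_mul_U D (Submodule.mul_mem_mul Submodule.mem_top hu))
  have Mright : ∀ a : ℂ ⊗[ℚ] H, ∀ x ∈ M, x * a ∈ M := by
    intro a x hx
    rw [memM]
    intro u hu
    rw [D.BC_symm, adjC_right D, D.BC_symm]
    exact (memM x).mp hx _ (U_mul_top D (Submodule.mul_mem_mul hu Submodule.mem_top))
  have MleH11 : ∀ x ∈ M, x ∈ D.H11 := by
    intro x hx
    obtain ⟨a, ha, b, hb, c, hc, rfl⟩ := D.decomp x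
    have ha0 : a = 0 := by
      apply D.zero_of_20 ha
      have h1 : D.BC (a + b + c) (sigmaC H a) = 0 := by
        rw [D.BC_symm]
        exact (memM _).mp hx _ (H02_le_U D (D.sigma_20 a ha))
      rw [map_add, map_add, LinearMap.add_apply, LinearMap.add_apply,
        D.bc_11_02 hb (D.sigma_20 a ha), D.bc_02_02 hc (D.sigma_20 a ha),
        add_zero, add_zero] at h1
      exact h1
    have hc0 : c = 0 := by
      apply D.zero_of_02 hc
      have h1 : D.BC (a + b + c) (sigmaC H c) = 0 := by
        rw [D.BC_symm]
        exact (memM _).mp hx _ (H20_le_U D (D.sigma_02 c hc))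
      rw [map_add, map_add, LinearMap.add_apply, LinearMap.add_apply,
        D.bc_20_20 ha (D.sigma_02 c hc), D.bc_11_20 hb (D.sigma_02 c hc),
        add_zero, zero_add] at h1
      exact h1
    rw [ha0, hc0, zero_add, add_zero]
    exact hb
  have disjUM : Disjoint (U D) M := by
    rw [Submodule.disjoint_def]
    intro x hU hM'
    apply D.zero_of_11 (MleH11 x hM')
    rw [D.BC_symm]
    exact (memM x).mp hM' _ (U_sigma D x hU)
  have hcompl : IsCompl (U D) M :=
    (LinearMap.BilinForm.isCompl_orthogonal_iff_disjoint refl).mpr disjUM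
  have h1top : (1 : ℂ ⊗[ℚ] H) ∈ U D ⊔ M := by rw [hcompl.sup_eq_top]; trivial
  obtain ⟨u, hu, m, hm, hum⟩ := Submodule.mem_sup.mp h1top
  -- conclude
  have hNc0 : ∀ n ∈ Nc, n = 0 := by
    intro n hn
    have hnm : n * m = 0 := disj11 _ (MleH11 _ (Mleft n m hm)) (hNr m n hn)
    have hmn : m * n = 0 := disj11 _ (MleH11 _ (Mright n m hm)) (hNl m n hn)
    have hunu : u * n * u = 0 := by
      have : u * n * u ∈ (⊥ : Submodule ℂ (ℂ ⊗[ℚ] H)) :=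
        PU (Submodule.mul_mem_mul (Submodule.mul_mem_mul hu hn) hu)
      simpa using this
    have hexp : (u + m) * n * (u + m) = u * n * u + u * (n * m) + (m * n) * (u + m) := by
      noncomm_ring
    calc n = (u + m) * n * (u + m) := by rw [hum, one_mul, mul_one]
    _ = u * n * u + u * (n * m) + (m * n) * (u + m) := hexp
    _ = 0 := by rw [hnm, hmn, hunu, mul_zero, zero_mul, add_zero, add_zero]
  rw [eq_bot_iff]
  intro x hx
  have : inclH H x ∈ Nc := Submodule.subset_span ⟨x, hx, rfl⟩
  rw [Submodule.mem_bot]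
  exact inclH_eq_zero (hNc0 _ this)

end Part3


/-- Assume the center `K := Z(H)` of `H` is a field. If `W + σ(W) ≠ H_ℂ`
(i.e. the orthogonal factor `M` is nonzero), then `H` is a simple ring: its only two-sided
ideals (additive subgroups stable under left and right multiplication) are `0` and `H`;
thus `H` is a simple central algebra over `K`. -/
theorem simple_of_M_nonzero (D : HodgeAlgebraData H)
    (hK : IsField (Subring.center H))
    (hM : (D.W.restrictScalars ℚ) ⊔ D.sigmaW ≠ ⊤) :
    ∀ I : AddSubgroup H, (∀ x ∈ I, ∀ a : H, a * x ∈ I ∧ x * a ∈ I) →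
      I = ⊥ ∨ I = ⊤ := by
  intro I hI
  -- `I` as a `ℚ`-submodule
  set I' : Submodule ℚ H :=
    { carrier := I
      add_mem' := fun ha hb => I.add_mem ha hb
      zero_mem' := I.zero_mem
      smul_mem' := fun q x hx => by
        rw [Algebra.smul_def]
        exact (hI x hx _).1 } with hI'def
  have memI' : ∀ x : H, x ∈ I' ↔ x ∈ I := fun x => Iff.rfl
  set P : Submodule ℚ H := LinearMap.BilinForm.orthogonal D.B I' with hPdef
  have memP : ∀ x : H, x ∈ P ↔ ∀ n ∈ I', D.B n x = 0 := fun x =>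
    LinearMap.BilinForm.mem_orthogonal_iff
  -- `P` is a two-sided ideal
  have hPl : ∀ a : H, ∀ x ∈ P, a * x ∈ P := by
    intro a x hx
    rw [memP]
    intro n hn
    rw [D.B_symm, D.adj_left, D.B_symm]
    exact (memP x).mp hx _ ((hI n hn _).1)
  have hPr : ∀ a : H, ∀ x ∈ P, x * a ∈ P := by
    intro a x hx
    rw [memP]
    intro n hn
    rw [D.B_symm, D.adj_right, D.B_symm]
    exact (memP x).mp hx _ ((hI n hn _).2)
  -- the radical is zero
  have hNbot : I' ⊓ P = ⊥ := by
    apply Part3.isotropic_ideal_eq_bot D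
    · intro a x hx
      exact ⟨(hI x hx.1 a).1, hPl a x hx.2⟩
    · intro a x hx
      exact ⟨(hI x hx.1 a).2, hPr a x hx.2⟩
    · intro x hx y hy
      exact (memP y).mp hy.2 x hx.1
  have refl : LinearMap.BilinForm.IsRefl D.B := fun x y h => by rw [D.B_symm]; exact h
  have hcompl : IsCompl I' P :=
    (LinearMap.BilinForm.isCompl_orthogonal_iff_disjoint refl).mpr (disjoint_iff.mpr hNbot)
  have h1top : (1 : H) ∈ I' ⊔ P := by rw [hcompl.sup_eq_top]; trivial
  obtain ⟨e, he, f, hf, hef⟩ := Submodule.mem_sup.mp h1top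
  have hef' : e = 1 - f := eq_sub_of_add_eq hef
  -- `e` is a central idempotent
  have hcent : ∀ a : H, e * a = a * e := by
    intro a
    have h1 : e * a - a * e ∈ I' := I'.sub_mem (hI e he a).2 (hI e he a).1
    have key : e * a - a * e = a * f - f * a := by rw [hef']; noncomm_ring
    have h2 : e * a - a * e ∈ P := by
      rw [key]
      exact P.sub_mem (hPl a f hf) (hPr a f hf)
    have h3 : e * a - a * e ∈ I' ⊓ P := ⟨h1, h2⟩
    rw [hNbot, Submodule.mem_bot] at h3
    exact sub_eq_zero.mp h3
  have hef0 : e * f = 0 := by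
    have h3 : e * f ∈ I' ⊓ P := ⟨(hI e he f).2, hPl e f hf⟩
    rw [hNbot, Submodule.mem_bot] at h3
    exact h3
  have hidem : e * e = e := by
    have : e * (e + f) = e * e + e * f := mul_add e e f
    rw [hef, hef0, add_zero, mul_one] at this
    exact this.symm
  -- use that the center is a field
  set ec : Subring.center H := ⟨e, Subring.mem_center_iff.mpr fun g => (hcent g).symm⟩ with hec
  have hecidem : ec * (1 - ec) = 0 := by
    apply Subtype.ext
    show e * (1 - e) = 0
    rw [mul_sub, mul_one, hidem, sub_self]
  by_cases hec0 : ec = 0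
  · -- then `e = 0`, `f = 1`, and `I = ⊥`
    left
    have he0 : e = 0 := congrArg Subtype.val hec0
    rw [AddSubgroup.eq_bot_iff_forall]
    intro x hx
    have hxP : x ∈ P := by
      have hf1 : f = 1 := by rw [he0, zero_add] at hef; exact hef
      have h1P : (1 : H) ∈ P := hf1 ▸ hf
      have := hPl x 1 h1P
      rwa [mul_one] at this
    have h3 : x ∈ I' ⊓ P := ⟨hx, hxP⟩
    rw [hNbot, Submodule.mem_bot] at h3
    exact h3
  · -- then `e = 1` and `I = ⊤`
    right
    obtain ⟨b, hb⟩ := hK.mul_inv_cancel hec0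
    have h1 : (1 : Subring.center H) - ec = 0 := by
      calc (1 : Subring.center H) - ec = (ec * b) * (1 - ec) := by rw [hb, one_mul]
      _ = b * (ec * (1 - ec)) := by rw [hK.mul_comm ec b, mul_assoc]
      _ = 0 := by rw [hecidem, mul_zero]
    have he1 : e = 1 := by
      have : ec = 1 := by
        have := sub_eq_zero.mp h1
        exact this.symm
      exact congrArg Subtype.val this
    rw [AddSubgroup.eq_top_iff']
    intro x
    have h1I : (1 : H) ∈ I := by rw [← he1]; exact he
    have := (hI 1 h1I x).1
    rwa [mul_one] at this
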